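/- arXiv:1708.05075 — 4 statements merged into one kernel-verified Lean document; each statement's English description precedes it below -/
import Mathlib

section
/- A betweenness structure B of order n is linear if and only if B is isomorphic to 𝒫_n, or n=4 and B is isomorphic to 𝒞₄. (Up to isomorphism, the linear betweenness structures are exactly 𝒫_n (n≥1) and 𝒞₄.) -/
open scoped ENNReal

namespace FMS

/-- An (ordered) triple is collinear if one of its points lies between the other two. -/
def CollinearTriple {X : Type*} (btw : X → X → X → Prop) (x y z : X) : Prop :=
  btw x y z ∨ btw y x z ∨ btw x z y

/-- A finite set of points is collinear if it can be enumerated as a collinear triple. -/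
def CollinearSet {X : Type*} (btw : X → X → X → Prop) (T : Finset X) : Prop :=
  ∃ x y z : X, (T : Set X) = {x, y, z} ∧ CollinearTriple btw x y z

/-- A triangle is a 3-element subset of the ground set that is not collinear. -/
def IsTriangle {X : Type*} (btw : X → X → X → Prop) (T : Finset X) : Prop :=
  T.card = 3 ∧ ¬ CollinearSet btw T

/-- The co-size of a betweenness structure: the number of triangles. -/
noncomputable def coSize {X : Type*} (btw : X → X → X → Prop) : ℕ :=
  Set.ncard {T : Finset X | IsTriangle btw T}

/-- The degree of a point: the number of triangles containing it. -/
noncomputable def degB {X : Type*} (btw : X → X → X → Prop) (x : X) : ℕ :=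
  Set.ncard {T : Finset X | IsTriangle btw T ∧ x ∈ T}

/-- A betweenness structure is linear if every 3-element subset is collinear. -/
def Linear {X : Type*} (btw : X → X → X → Prop) : Prop :=
  ∀ T : Finset X, T.card = 3 → CollinearSet btw T

/-- The axioms (P1)-(P4) of (almost-metrizable) betweenness structures. -/
def IsBtw {X : Type*} (btw : X → X → X → Prop) : Prop :=
  (∀ x z : X, btw x x z) ∧
  (∀ x y z : X, btw x y z → btw z y x) ∧
  (∀ x y z : X, btw x y z → btw y x z → x = y) ∧
  (∀ x y z w : X, btw x y z → btw x w y → btw x w z ∧ btw w y z)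

/-- Isomorphism of betweenness structures. -/
def BIso {X Y : Type*} (btwX : X → X → X → Prop) (btwY : Y → Y → Y → Prop) : Prop :=
  ∃ e : X ≃ Y, ∀ x y z : X, btwX x y z ↔ btwY (e x) (e y) (e z)

/-- The cost (length) of a walk, given edge weights `w` (non-edges have weight `⊤`). -/
noncomputable def walkCost {X : Type*} (w : X → X → ℝ≥0∞) : List X → ℝ≥0∞
  | [] => 0
  | [_] => 0
  | a :: b :: l => w a b + walkCost w (b :: l)

/-- Shortest-path distance for the weighted graph with weight function `w`. -/
noncomputable def spDist {X : Type*} (w : X → X → ℝ≥0∞) (x y : X) : ℝ≥0∞ :=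
  ⨅ l ∈ {l : List X | l.head? = some x ∧ l.getLast? = some y}, walkCost w l

/-- The betweenness structure induced by the weighted graph with weight function `w`:
`y` is between `x` and `z` iff `d(x,y) + d(y,z) = d(x,z)` for the shortest-path metric. -/
def metricBtw {X : Type*} (w : X → X → ℝ≥0∞) (x y z : X) : Prop :=
  spDist w x y + spDist w y z = spDist w x z

/-- The ordered betweenness structure `𝒫ₙ` induced by the path `Pₙ`. -/
def pathBtw (n : ℕ) : Fin n → Fin n → Fin n → Prop := fun i j k =>
  (i ≤ j ∧ j ≤ k) ∨ (k ≤ j ∧ j ≤ i)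

/-- Unit edge weights of the 4-cycle `C₄`. -/
noncomputable def wC4 : Fin 4 → Fin 4 → ℝ≥0∞ := fun i j =>
  if (j : ℕ) = ((i : ℕ) + 1) % 4 ∨ (i : ℕ) = ((j : ℕ) + 1) % 4 then 1 else ⊤

/-- Unit edge weights of the complete graph `K₃`. -/
noncomputable def wK3 : Fin 3 → Fin 3 → ℝ≥0∞ := fun i j => if i ≠ j then 1 else ⊤

/-- A betweenness structure is regular if no 4-element subset induces a substructure
isomorphic to `𝒞₄` (no cyclic line). -/
def Regular {X : Type*} (btw : X → X → X → Prop) : Prop :=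
  ∀ Y : Set X, ¬ BIso (fun a b c : Y => btw a.1 b.1 c.1) (metricBtw wC4)

/-- A betweenness structure is orderable if it has an ordered extension: there is an
ordering (injective labeling by naturals) of the points such that every betweenness
relation is compatible with it. -/
def Orderable {X : Type*} (btw : X → X → X → Prop) : Prop :=
  ∃ f : X → ℕ, Function.Injective f ∧
    ∀ x y z : X, btw x y z → (f x ≤ f y ∧ f y ≤ f z) ∨ (f z ≤ f y ∧ f y ≤ f x)

/-- The triangle hypergraph is a Δ-star: at most one edge, or all pairs of distinct
triangles meet in the same kernel `K`. -/
def DeltaStar {X : Type*} (btw : X → X → X → Prop) : Prop :=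
  {T : Finset X | IsTriangle btw T}.Subsingleton ∨
  ∃ K : Set X, ∀ E F : Finset X, IsTriangle btw E → IsTriangle btw F → E ≠ F →
    (E : Set X) ∩ (F : Set X) = K

/-- The triangle hypergraph is a tight star: at most one edge, or all pairs of distinct
triangles meet in the same 2-element kernel `K`. -/
def TightStar {X : Type*} (btw : X → X → X → Prop) : Prop :=
  {T : Finset X | IsTriangle btw T}.Subsingleton ∨
  ∃ K : Set X, K.ncard = 2 ∧ ∀ E F : Finset X, IsTriangle btw E → IsTriangle btw F → E ≠ F →
    (E : Set X) ∩ (F : Set X) = K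

/-- A class of betweenness structures is hereditary if it is closed under isomorphism
and under taking induced substructures. -/
def Hereditary (Φ : ∀ X : Type, (X → X → X → Prop) → Prop) : Prop :=
  (∀ (X Y : Type) (bX : X → X → X → Prop) (bY : Y → Y → Y → Prop),
      BIso bX bY → Φ X bX → Φ Y bY) ∧
  (∀ (X : Type) (bX : X → X → X → Prop) (Y : Set X), Y.Nonempty →
      Φ X bX → Φ Y (fun a b c : Y => bX a.1 b.1 c.1))

/-! Weight functions of the graphs `Q`, `R`, `S`, `T`.
In each of the following, the vertex `Sum.inl a : Fin m ⊕ Bool` is the point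
`x_{a+1}` (so `x₁,…,x_m` with `m = n - 2` are `Sum.inl 0, …, Sum.inl (m-1)`),
`Sum.inr false` is `y` and `Sum.inr true` is `z`. The parameter `i` is 1-based,
as in the paper. Non-edges have weight `⊤`. -/

/-- `Q²ₙ` with `m = n - 2`: path plus edges `{y,x₁}, {z,x₁}, {y,z}`. -/
noncomputable def wQ2 (m : ℕ) : Fin m ⊕ Bool → Fin m ⊕ Bool → ℝ≥0∞
  | Sum.inl a, Sum.inl b => if (a : ℕ) + 1 = (b : ℕ) ∨ (b : ℕ) + 1 = (a : ℕ) then 1 else ⊤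
  | Sum.inl a, Sum.inr _ => if (a : ℕ) = 0 then 1 else ⊤
  | Sum.inr _, Sum.inl b => if (b : ℕ) = 0 then 1 else ⊤
  | Sum.inr c, Sum.inr d => if c ≠ d then 1 else ⊤

/-- `Q³ₙ` with `m = n - 2`: path plus edges `{y,x₁}, {z,x₁}`. -/
noncomputable def wQ3 (m : ℕ) : Fin m ⊕ Bool → Fin m ⊕ Bool → ℝ≥0∞
  | Sum.inl a, Sum.inl b => if (a : ℕ) + 1 = (b : ℕ) ∨ (b : ℕ) + 1 = (a : ℕ) then 1 else ⊤
  | Sum.inl a, Sum.inr _ => if (a : ℕ) = 0 then 1 else ⊤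
  | Sum.inr _, Sum.inl b => if (b : ℕ) = 0 then 1 else ⊤
  | Sum.inr _, Sum.inr _ => ⊤

/-- `R²ₙ,ᵢ` with `m = n - 2`: path with edge `{xᵢ, xᵢ₊₁}` deleted, plus unit edges
`{y,xᵢ}, {z,xᵢ}, {y,xᵢ₊₁}, {z,xᵢ₊₁}, {y,z}`. -/
noncomputable def wR2 (m i : ℕ) : Fin m ⊕ Bool → Fin m ⊕ Bool → ℝ≥0∞
  | Sum.inl a, Sum.inl b =>
      if ((a : ℕ) + 1 = (b : ℕ) ∧ (a : ℕ) + 1 ≠ i) ∨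
         ((b : ℕ) + 1 = (a : ℕ) ∧ (b : ℕ) + 1 ≠ i) then 1 else ⊤
  | Sum.inl a, Sum.inr _ => if (a : ℕ) + 1 = i ∨ (a : ℕ) = i then 1 else ⊤
  | Sum.inr _, Sum.inl b => if (b : ℕ) + 1 = i ∨ (b : ℕ) = i then 1 else ⊤
  | Sum.inr c, Sum.inr d => if c ≠ d then 1 else ⊤

/-- `R³ₙ,ᵢ` with `m = n - 2`: path with edge `{xᵢ, xᵢ₊₁}` deleted, plus unit edges
`{y,xᵢ}, {z,xᵢ}` and weight-2 edges `{y,xᵢ₊₁}, {z,xᵢ₊₁}`. -/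
noncomputable def wR3 (m i : ℕ) : Fin m ⊕ Bool → Fin m ⊕ Bool → ℝ≥0∞
  | Sum.inl a, Sum.inl b =>
      if ((a : ℕ) + 1 = (b : ℕ) ∧ (a : ℕ) + 1 ≠ i) ∨
         ((b : ℕ) + 1 = (a : ℕ) ∧ (b : ℕ) + 1 ≠ i) then 1 else ⊤
  | Sum.inl a, Sum.inr _ => if (a : ℕ) + 1 = i then 1 else if (a : ℕ) = i then 2 else ⊤
  | Sum.inr _, Sum.inl b => if (b : ℕ) + 1 = i then 1 else if (b : ℕ) = i then 2 else ⊤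
  | Sum.inr _, Sum.inr _ => ⊤

/-- `R⁴ₙ,ᵢ` with `m = n - 2`: path with edge `{xᵢ, xᵢ₊₁}` deleted, plus unit edges
`{y,xᵢ}, {z,xᵢ}, {y,xᵢ₊₁}, {z,xᵢ₊₁}`. -/
noncomputable def wR4 (m i : ℕ) : Fin m ⊕ Bool → Fin m ⊕ Bool → ℝ≥0∞
  | Sum.inl a, Sum.inl b =>
      if ((a : ℕ) + 1 = (b : ℕ) ∧ (a : ℕ) + 1 ≠ i) ∨
         ((b : ℕ) + 1 = (a : ℕ) ∧ (b : ℕ) + 1 ≠ i) then 1 else ⊤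
  | Sum.inl a, Sum.inr _ => if (a : ℕ) + 1 = i ∨ (a : ℕ) = i then 1 else ⊤
  | Sum.inr _, Sum.inl b => if (b : ℕ) + 1 = i ∨ (b : ℕ) = i then 1 else ⊤
  | Sum.inr _, Sum.inr _ => ⊤

/-- `S²ₙ` with `m = n - 2`: path plus unit edges `{x₁,y}, {x_m,z}` and an edge `{y,z}`
of weight `n - 2 = m`. -/
noncomputable def wS2 (m : ℕ) : Fin m ⊕ Bool → Fin m ⊕ Bool → ℝ≥0∞
  | Sum.inl a, Sum.inl b => if (a : ℕ) + 1 = (b : ℕ) ∨ (b : ℕ) + 1 = (a : ℕ) then 1 else ⊤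
  | Sum.inl a, Sum.inr c =>
      if (c = false ∧ (a : ℕ) = 0) ∨ (c = true ∧ (a : ℕ) = m - 1) then 1 else ⊤
  | Sum.inr c, Sum.inl b =>
      if (c = false ∧ (b : ℕ) = 0) ∨ (c = true ∧ (b : ℕ) = m - 1) then 1 else ⊤
  | Sum.inr c, Sum.inr d => if c ≠ d then (m : ℝ≥0∞) else ⊤

/-- `S³ₙ` with `m = n - 2`: path plus a unit edge `{x₁,y}`, a weight-2 edge `{x_m,z}`
and an edge `{y,z}` of weight `n - 2 = m`. -/
noncomputable def wS3 (m : ℕ) : Fin m ⊕ Bool → Fin m ⊕ Bool → ℝ≥0∞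
  | Sum.inl a, Sum.inl b => if (a : ℕ) + 1 = (b : ℕ) ∨ (b : ℕ) + 1 = (a : ℕ) then 1 else ⊤
  | Sum.inl a, Sum.inr c =>
      if c = false ∧ (a : ℕ) = 0 then 1 else if c = true ∧ (a : ℕ) = m - 1 then 2 else ⊤
  | Sum.inr c, Sum.inl b =>
      if c = false ∧ (b : ℕ) = 0 then 1 else if c = true ∧ (b : ℕ) = m - 1 then 2 else ⊤
  | Sum.inr c, Sum.inr d => if c ≠ d then (m : ℝ≥0∞) else ⊤

/-- `S⁴ₙ` with `m = n - 2`: path plus unit edges `{x₁,y}, {x_m,z}` and an edge `{y,z}`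
of weight `n - 3 = m - 1`. -/
noncomputable def wS4 (m : ℕ) : Fin m ⊕ Bool → Fin m ⊕ Bool → ℝ≥0∞
  | Sum.inl a, Sum.inl b => if (a : ℕ) + 1 = (b : ℕ) ∨ (b : ℕ) + 1 = (a : ℕ) then 1 else ⊤
  | Sum.inl a, Sum.inr c =>
      if (c = false ∧ (a : ℕ) = 0) ∨ (c = true ∧ (a : ℕ) = m - 1) then 1 else ⊤
  | Sum.inr c, Sum.inl b =>
      if (c = false ∧ (b : ℕ) = 0) ∨ (c = true ∧ (b : ℕ) = m - 1) then 1 else ⊤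
  | Sum.inr c, Sum.inr d => if c ≠ d then ((m - 1 : ℕ) : ℝ≥0∞) else ⊤

/-- `Tₙ,ᵢ` with `m = n - 4`; the vertices `Sum.inl a` are the points `x_{a+1}`, and
`Sum.inr 0, Sum.inr 1, Sum.inr 2, Sum.inr 3` are `y, z, u, v` respectively. All edges
have unit weight: the path edges `{x_j, x_{j+1}}` (`1 ≤ j ≤ n-5`, `j ≠ i`) together with
`{xᵢ,y}, {xᵢ,z}, {y,u}, {y,v}, {z,u}, {z,v}, {u,xᵢ₊₁}, {v,xᵢ₊₁}`. -/
noncomputable def wT (m i : ℕ) : Fin m ⊕ Fin 4 → Fin m ⊕ Fin 4 → ℝ≥0∞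
  | Sum.inl a, Sum.inl b =>
      if ((a : ℕ) + 1 = (b : ℕ) ∧ (a : ℕ) + 1 ≠ i) ∨
         ((b : ℕ) + 1 = (a : ℕ) ∧ (b : ℕ) + 1 ≠ i) then 1 else ⊤
  | Sum.inl a, Sum.inr c =>
      if ((a : ℕ) + 1 = i ∧ (c : ℕ) ≤ 1) ∨ ((a : ℕ) = i ∧ 2 ≤ (c : ℕ)) then 1 else ⊤
  | Sum.inr c, Sum.inl b =>
      if ((b : ℕ) + 1 = i ∧ (c : ℕ) ≤ 1) ∨ ((b : ℕ) = i ∧ 2 ≤ (c : ℕ)) then 1 else ⊤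
  | Sum.inr c, Sum.inr d =>
      if ((c : ℕ) ≤ 1 ∧ 2 ≤ (d : ℕ)) ∨ ((d : ℕ) ≤ 1 ∧ 2 ≤ (c : ℕ)) then 1 else ⊤

/-!
In a linear structure every triple, degenerate or not, is collinear. A pair `p, q` maximising
the number of points between them then has every point between it. If `p` is never strictly
between two points, `u ≤ v ↔ (p u v)` is a linear order along which `B` is `𝒫ₙ`. Otherwise some
`(u p v)` with `u, v ≠ p` closes up with `q` to a square `u p v q`, a copy of `𝒞₄`; a short case
analysis with linearity shows that no fifth point can sit on a line with the vertices of a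
square, so `B` is `𝒞₄`.
-/

section Betweenness

variable {X : Type*} {btw : X → X → X → Prop}

namespace IsBtw

variable (hB : IsBtw btw)
include hB

theorem self_left (x z : X) : btw x x z := hB.1 x z

theorem symm {x y z : X} (h : btw x y z) : btw z y x := hB.2.1 x y z h

theorem eq_of_swap {x y z : X} (h : btw x y z) (h' : btw y x z) : x = y := hB.2.2.1 x y z h h'

theorem nest_left {x y z w : X} (h : btw x y z) (h' : btw x w y) : btw x w z ∧ btw w y z :=
  hB.2.2.2 x y z w h h'

theorem self_right (x y : X) : btw x y y := hB.symm (hB.self_left y x)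

theorem nest_right {x y z w : X} (h : btw x y z) (h' : btw y w z) : btw x y w ∧ btw x w z :=
  have h'' := hB.nest_left (hB.symm h) (hB.symm h')
  ⟨hB.symm h''.2, hB.symm h''.1⟩

theorem eq_of_btw_self {x y : X} (h : btw x y x) : x = y := hB.eq_of_swap h (hB.self_right y x)

theorem eq_of_swap_right {x y z : X} (h : btw x y z) (h' : btw x z y) : y = z :=
  (hB.eq_of_btw_self (hB.nest_left h h').2).symm

end IsBtw

namespace CollinearTriple

variable {x y z : X}

theorem swap12 (hB : IsBtw btw) : CollinearTriple btw x y z → CollinearTriple btw y x z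
  | .inl h => .inr (.inl h)
  | .inr (.inl h) => .inl h
  | .inr (.inr h) => .inr (.inr (hB.symm h))

theorem swap23 (hB : IsBtw btw) : CollinearTriple btw x y z → CollinearTriple btw x z y
  | .inl h => .inr (.inr h)
  | .inr (.inl h) => .inr (.inl (hB.symm h))
  | .inr (.inr h) => .inl h

end CollinearTriple

theorem linear_of_forall_collinearTriple (h : ∀ x y z : X, CollinearTriple btw x y z) :
    Linear btw := by
  classical
  intro T hT
  obtain ⟨x, y, z, -, -, -, rfl⟩ := Finset.card_eq_three.1 hT
  exact ⟨x, y, z, by simp, h x y z⟩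

theorem Linear.collinearTriple (hlin : Linear btw) (hB : IsBtw btw) (x y z : X) :
    CollinearTriple btw x y z := by
  classical
  by_cases hxy : x = y
  · exact .inl (hxy ▸ hB.self_left x z)
  by_cases hyz : y = z
  · exact .inl (hyz ▸ hB.self_right x y)
  by_cases hxz : x = z
  · exact .inr (.inl (hxz ▸ hB.self_right y x))
  obtain ⟨a, b, c, hT, habc⟩ :=
    hlin {x, y, z} (Finset.card_eq_three.2 ⟨x, y, z, hxy, hxz, hyz, rfl⟩)
  have hmem : ∀ t ∈ ({x, y, z} : Finset X), t = a ∨ t = b ∨ t = c := fun t ht => by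
    have : t ∈ ({a, b, c} : Set X) := hT ▸ Finset.mem_coe.2 ht
    simpa using this
  have hx := hmem x (by simp)
  have hy := hmem y (by simp)
  have hz := hmem z (by simp)
  rcases hx with rfl | rfl | rfl <;> rcases hy with rfl | rfl | rfl <;>
    rcases hz with rfl | rfl | rfl <;>
    first
    | exact absurd rfl hxy | exact absurd rfl hxz | exact absurd rfl hyz
    | exact habc | exact habc.swap12 hB | exact habc.swap23 hB
    | exact (habc.swap12 hB).swap23 hB | exact (habc.swap23 hB).swap12 hB
    | exact ((habc.swap12 hB).swap23 hB).swap12 hB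

end Betweenness

theorem BIso.card_eq {X Y : Type*} [Fintype X] [Fintype Y] {btwX : X → X → X → Prop}
    {btwY : Y → Y → Y → Prop} (h : BIso btwX btwY) : Fintype.card X = Fintype.card Y :=
  Fintype.card_congr h.choose

theorem BIso.forall_collinearTriple {X Y : Type*} {btwX : X → X → X → Prop}
    {btwY : Y → Y → Y → Prop} (h : BIso btwX btwY)
    (hY : ∀ x y z : Y, CollinearTriple btwY x y z) (x y z : X) :
    CollinearTriple btwX x y z := by
  obtain ⟨e, he⟩ := h
  simpa only [CollinearTriple, he] using hY (e x) (e y) (e z)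

theorem collinearTriple_pathBtw {n : ℕ} (i j k : Fin n) : CollinearTriple (pathBtw n) i j k := by
  simp only [CollinearTriple, pathBtw]
  omega

theorem bIso_pathBtw_of_linearOrder {X : Type*} [LinearOrder X] [Fintype X] {n : ℕ}
    (hcard : Fintype.card X = n) {btw : X → X → X → Prop}
    (h : ∀ x y z, btw x y z ↔ x ≤ y ∧ y ≤ z ∨ z ≤ y ∧ y ≤ x) : BIso btw (pathBtw n) :=
  ⟨(monoEquivOfFin X hcard).symm.toEquiv, fun x y z => by simp [h, pathBtw]⟩

def dC4 (i j : Fin 4) : ℕ := min (((j : ℕ) + 4 - i) % 4) (((i : ℕ) + 4 - j) % 4)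

theorem spDist_le_walkCost {X : Type*} (w : X → X → ℝ≥0∞) {x y : X} (l : List X)
    (hx : l.head? = some x) (hy : l.getLast? = some y) : spDist w x y ≤ walkCost w l :=
  iInf₂_le l ⟨hx, hy⟩

theorem le_walkCost {X : Type*} {w : X → X → ℝ≥0∞} {d : X → X → ℝ≥0∞}
    (h0 : ∀ x, d x x = 0) (htri : ∀ x y z, d x z ≤ w x y + d y z) :
    ∀ (l : List X) {x y : X}, l.head? = some x → l.getLast? = some y → d x y ≤ walkCost w l
  | [], _, _, hx, _ => by simp at hx
  | [a], _, _, hx, hy => by simp_all [walkCost]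
  | a :: b :: l, x, y, hx, hy => by
    obtain rfl : a = x := by simpa using hx
    rw [List.getLast?_cons_cons] at hy
    exact (htri a b y).trans (add_le_add_right (le_walkCost h0 htri (b :: l) rfl hy) _)

theorem le_spDist {X : Type*} {w : X → X → ℝ≥0∞} {d : X → X → ℝ≥0∞}
    (h0 : ∀ x, d x x = 0) (htri : ∀ x y z, d x z ≤ w x y + d y z) (x y : X) :
    d x y ≤ spDist w x y :=
  le_iInf₂ fun l hl => le_walkCost h0 htri l hl.1 hl.2

theorem spDist_wC4 (i j : Fin 4) : spDist wC4 i j = dC4 i j := by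
  refine le_antisymm ?_ (le_spDist (d := fun i j => (dC4 i j : ℝ≥0∞)) ?_ ?_ i j)
  · -- Every pair is joined by a walk `[i]`, `[i, j]` or `[i, i + 1, j]` of cost `dC4 i j`.
    have h0 := spDist_le_walkCost wC4 [i] rfl rfl
    have h1 := spDist_le_walkCost wC4 [i, j] rfl rfl
    have h2 := spDist_le_walkCost wC4 [i, i + 1, j] rfl rfl
    simp only [walkCost, wC4, add_zero] at h0 h1 h2
    fin_cases i <;> fin_cases j <;> norm_num [dC4, Fin.val_add] at h0 h1 h2 ⊢ <;> assumption
  · intro i; simp [dC4]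
  · intro i j k
    unfold wC4
    split_ifs with hij
    · have : dC4 i k ≤ 1 + dC4 j k := by revert i j k; decide
      exact_mod_cast this
    · simp

theorem metricBtw_wC4_iff (i j k : Fin 4) :
    metricBtw wC4 i j k ↔ dC4 i j + dC4 j k = dC4 i k := by
  simp only [metricBtw, spDist_wC4]
  norm_cast

theorem collinearTriple_metricBtw_wC4 (i j k : Fin 4) :
    CollinearTriple (metricBtw wC4) i j k := by
  simp only [CollinearTriple, metricBtw_wC4_iff]
  revert i j k
  decide

theorem IsBtw.iff_metricBtw_wC4 {X : Type*} {btw : X → X → X → Prop} (hB : IsBtw btw)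
    {f : Fin 4 → X} (hf : Function.Injective f) (hsq : ∀ i, btw (f i) (f (i + 1)) (f (i + 2)))
    (i j k : Fin 4) : btw (f i) (f j) (f k) ↔ metricBtw wC4 i j k := by
  have hle : ∀ i j k, dC4 i j + dC4 j k = dC4 i k → btw (f i) (f j) (f k) := by
    have : ∀ i j k : Fin 4, dC4 i j + dC4 j k = dC4 i k →
        j = i ∨ j = k ∨ (j = i + 1 ∧ k = i + 2) ∨ (j = k + 1 ∧ i = k + 2) := by
      decide
    intro i j k h
    rcases this i j k h with rfl | rfl | ⟨rfl, rfl⟩ | ⟨rfl, rfl⟩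
    exacts [hB.self_left _ _, hB.self_right _ _, hsq i, hB.symm (hsq k)]
  rw [metricBtw_wC4_iff]
  refine ⟨fun h => ?_, hle i j k⟩
  -- A triple outside `𝒞₄` has `i = k`, or one of its swaps lies in `𝒞₄` and refutes it.
  have : ∀ i j k : Fin 4, dC4 i j + dC4 j k = dC4 i k ∨ i = k ∨
      dC4 i k + dC4 k j = dC4 i j ∨ dC4 j i + dC4 i k = dC4 j k := by
    decide
  rcases this i j k with hijk | rfl | hikj | hjik
  · exact hijk
  · obtain rfl := hf (hB.eq_of_btw_self h)
    simp [dC4]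
  · obtain rfl := hf (hB.eq_of_swap_right h (hle i k j hikj))
    simp [dC4]
  · obtain rfl := hf (hB.eq_of_swap h (hle j i k hjik))
    simp [dC4]

/-- `a b c d` are the vertices, in cyclic order, of a copy of `𝒞₄`. -/
structure IsSquare {X : Type*} (btw : X → X → X → Prop) (a b c d : X) : Prop where
  abc : btw a b c
  bcd : btw b c d
  cda : btw c d a
  dab : btw d a b
  ne_ab : a ≠ b
  ne_bc : b ≠ c
  ne_cd : c ≠ d
  ne_da : d ≠ a

namespace IsSquare

variable {X : Type*} {btw : X → X → X → Prop} {a b c d e : X}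

theorem rotate (sq : IsSquare btw a b c d) : IsSquare btw b c d a :=
  ⟨sq.bcd, sq.cda, sq.dab, sq.abc, sq.ne_bc, sq.ne_cd, sq.ne_da, sq.ne_ab⟩

theorem flip (sq : IsSquare btw a b c d) (hB : IsBtw btw) : IsSquare btw b a d c :=
  ⟨hB.symm sq.dab, hB.symm sq.cda, hB.symm sq.bcd, hB.symm sq.abc,
    sq.ne_ab.symm, sq.ne_da.symm, sq.ne_cd.symm, sq.ne_bc.symm⟩

theorem ne_ac (sq : IsSquare btw a b c d) (hB : IsBtw btw) : a ≠ c := by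
  rintro rfl
  exact sq.ne_ab (hB.eq_of_btw_self sq.abc)

theorem bIso_metricBtw_wC4 (sq : IsSquare btw a b c d) (hB : IsBtw btw)
    (hall : ∀ x, x = a ∨ x = b ∨ x = c ∨ x = d) : BIso btw (metricBtw wC4) := by
  let f : Fin 4 → X := ![a, b, c, d]
  have hinj : Function.Injective f := by
    have := sq.ne_ab; have := sq.ne_bc; have := sq.ne_cd; have := sq.ne_da
    have := sq.ne_ac hB; have := sq.rotate.ne_ac hB
    intro i j h
    fin_cases i <;> fin_cases j <;> simp_all [f, eq_comm]
  have hsurj : Function.Surjective f := fun x => by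
    rcases hall x with rfl | rfl | rfl | rfl
    exacts [⟨0, rfl⟩, ⟨1, rfl⟩, ⟨2, rfl⟩, ⟨3, rfl⟩]
  have hsq : ∀ i, btw (f i) (f (i + 1)) (f (i + 2)) := by
    intro i
    fin_cases i
    exacts [sq.abc, sq.bcd, sq.cda, sq.dab]
  let e := Equiv.ofBijective f ⟨hinj, hsurj⟩
  refine ⟨e.symm, fun x y z => ?_⟩
  have he : ∀ x, f (e.symm x) = x := e.apply_symm_apply
  rw [← hB.iff_metricBtw_wC4 hinj hsq, he, he, he]

theorem not_btw_beyond (sq : IsSquare btw a b c d) (hB : IsBtw btw) (hlin : Linear btw)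
    (hea : e ≠ a) : ¬ btw e a c := by
  intro h
  have hbae : btw b a e := (hB.nest_left (hB.symm h) (hB.symm sq.abc)).2
  have hdae : btw d a e := (hB.nest_left (hB.symm h) sq.cda).2
  rcases hlin.collinearTriple hB b e d with hbed | hebd | hbde
  · exact hea (hB.eq_of_swap_right hdae (hB.symm (hB.nest_left hbed hbae).2)).symm
  · exact sq.ne_ab (hB.eq_of_swap (hB.nest_left hebd (hB.symm hbae)).2 (hB.symm sq.dab))
  · exact sq.ne_da (hB.eq_of_swap (hB.nest_left hbde (hB.symm sq.dab)).2 hdae).symm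

theorem not_btw_side (sq : IsSquare btw a b c d) (hB : IsBtw btw) (hlin : Linear btw)
    (hea : e ≠ a) (heb : e ≠ b) : ¬ btw a e b := by
  intro h
  obtain ⟨hcbe, hcea⟩ := hB.nest_right (hB.symm sq.abc) (hB.symm h)
  obtain ⟨hdae, hdeb⟩ := hB.nest_right sq.dab h
  rcases hlin.collinearTriple hB c e d with hced | hecd | hcde
  · exact sq.ne_bc (hB.eq_of_swap (hB.nest_left hced hcbe).1 sq.bcd).symm
  · exact heb (hB.eq_of_swap_right (hB.nest_left hdeb (hB.symm hecd)).2 hcbe)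
  · exact hea (hB.eq_of_swap_right hdae (hB.nest_left hcea hcde).2).symm

theorem not_btw_of_diagonals (sq : IsSquare btw a b c d) (hB : IsBtw btw)
    (hlin : Linear btw) (heb : e ≠ b) (hec : e ≠ c) (haec : btw a e c) (hbed : btw b e d) :
    ¬ btw a b e := by
  intro habe
  have hbec : btw b e c := (hB.nest_left haec habe).2
  have hecd : btw e c d := (hB.nest_left sq.bcd hbec).2
  rcases hlin.collinearTriple hB a d e with hade | hdae | haed
  · exact hec (hB.eq_of_swap_right (hB.nest_left haec hade).2 (hB.symm hecd))
  · exact heb (hB.eq_of_swap_right habe (hB.nest_left (hB.symm hbed) hdae).2).symm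
  · exact sq.ne_ab (hB.eq_of_swap (hB.nest_right (hB.symm sq.dab) haed).1 habe).symm

theorem not_btw_diagonals (sq : IsSquare btw a b c d) (hB : IsBtw btw) (hlin : Linear btw)
    (hea : e ≠ a) (heb : e ≠ b) (hec : e ≠ c) (hed : e ≠ d) :
    ¬ (btw a e c ∧ btw b e d) := by
  rintro ⟨haec, hbed⟩
  rcases hlin.collinearTriple hB a b e with habe | hbae | haeb
  · exact sq.not_btw_of_diagonals hB hlin heb hec haec hbed habe
  · exact (sq.flip hB).not_btw_of_diagonals hB hlin hea hed hbed haec hbae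
  · exact sq.not_btw_side hB hlin hea heb haeb

theorem eq_or_eq_or_eq_or_eq (sq : IsSquare btw a b c d) (hB : IsBtw btw) (hlin : Linear btw)
    (e : X) : e = a ∨ e = b ∨ e = c ∨ e = d := by
  by_contra! he
  obtain ⟨hea, heb, hec, hed⟩ := he
  have between : ∀ {a' b' c' d'}, IsSquare btw a' b' c' d' → e ≠ a' → e ≠ c' → btw a' e c' := by
    intro a' b' c' d' sq' ha hc
    rcases hlin.collinearTriple hB a' e c' with h | h | h
    · exact h
    · exact absurd h (sq'.not_btw_beyond hB hlin ha)
    · exact absurd (hB.symm h) (sq'.rotate.rotate.not_btw_beyond hB hlin hc)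
  exact sq.not_btw_diagonals hB hlin hea heb hec hed
    ⟨between sq hea hec, between sq.rotate heb hed⟩

end IsSquare

namespace Linear

variable {X : Type*} {btw : X → X → X → Prop}

theorem exists_forall_btw [Fintype X] [Nonempty X] (hlin : Linear btw) (hB : IsBtw btw) :
    ∃ p q : X, ∀ x, btw p x q := by
  classical
  let between (pq : X × X) : Finset X := Finset.univ.filter (btw pq.1 · pq.2)
  obtain ⟨⟨p, q⟩, hmax⟩ := Finite.exists_max fun pq => (between pq).card
  refine ⟨p, q, fun x => by_contra fun hx => ?_⟩
  have grow : ∀ p' q', (∀ y, btw p y q → btw p' y q') → ¬ btw p' x q' := by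
    intro p' q' hsub hx'
    have hlt : between (p, q) ⊂ between (p', q') :=
      (Finset.ssubset_iff_of_subset fun y hy => by simp_all [between]).2
        ⟨x, by simp [between, hx'], by simp [between, hx]⟩
    exact (Finset.card_lt_card hlt).not_ge (hmax (p', q'))
  rcases hlin.collinearTriple hB p x q with h | h | h
  · exact hx h
  · exact grow x q (fun y hy => (hB.nest_right h hy).2) (hB.self_left x q)
  · exact grow p x (fun y hy => (hB.nest_left h hy).1) (hB.self_right p x)

theorem isSquare_of_btw (hlin : Linear btw) (hB : IsBtw btw) {p q u v : X} (hpq : ∀ x, btw p x q)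
    (h : btw u p v) (hu : u ≠ p) (hv : v ≠ p) : IsSquare btw u p v q where
  abc := h
  bcd := hpq v
  cda := by
    refine hB.symm ((hlin.collinearTriple hB u q v).resolve_right ?_)
    rintro (hquv | huvq)
    · exact hv (hB.eq_of_swap_right h (hB.nest_left (hB.symm (hpq v)) hquv).2).symm
    · exact hu (hB.eq_of_swap h (hB.nest_right (hpq u) huvq).1)
  dab := hB.symm (hpq u)
  ne_ab := hu
  ne_bc := hv.symm
  ne_cd := by
    rintro rfl
    exact hu (hB.eq_of_swap h (hpq u))
  ne_da := by
    rintro rfl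
    exact hv (hB.eq_of_swap_right h (hB.symm (hpq v))).symm

theorem bIso_pathBtw_of_endpoint [Fintype X] {n : ℕ} (hcard : Fintype.card X = n)
    (hlin : Linear btw) (hB : IsBtw btw) {p : X} (hp : ∀ u v, btw u p v → u = p ∨ v = p) :
    BIso btw (pathBtw n) := by
  let _ : LinearOrder X :=
    { le := fun u v => btw p u v
      le_refl := hB.self_right p
      le_trans := fun u v w huv hvw => (hB.nest_left hvw huv).1
      le_antisymm := fun u v huv hvu => hB.eq_of_swap_right huv hvu
      le_total := fun u v => by
        rcases hlin.collinearTriple hB p u v with h | h | h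
        · exact .inl h
        · rcases hp u v h with rfl | rfl
          exacts [.inl (hB.self_left u v), .inr (hB.self_left v u)]
        · exact .inr h
      toDecidableLE := Classical.decRel _ }
  refine bIso_pathBtw_of_linearOrder hcard fun x y z => ⟨fun h => ?_, ?_⟩
  · rcases le_total x z with hxz | hzx
    · exact .inl (hB.nest_right hxz h)
    · exact .inr (hB.nest_right hzx (hB.symm h))
  · rintro (⟨hxy, hyz⟩ | ⟨hzy, hyx⟩)
    · exact (hB.nest_left hyz hxy).2
    · exact hB.symm (hB.nest_left hyx hzy).2

end Linear

/-- A betweenness structure of order `n` is linear iff it is isomorphic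
to `𝒫ₙ`, or `n = 4` and it is isomorphic to `𝒞₄`. -/
theorem stmt0 {X : Type} [Fintype X] [Nonempty X] {n : ℕ}
    (hcard : Fintype.card X = n) (btw : X → X → X → Prop) (hB : IsBtw btw) :
    Linear btw ↔
      (BIso btw (pathBtw n) ∨ (n = 4 ∧ BIso btw (metricBtw wC4))) := by
  refine ⟨fun hlin => ?_, ?_⟩
  · by_cases hsq : ∃ a b c d, IsSquare btw a b c d
    · obtain ⟨a, b, c, d, sq⟩ := hsq
      have hiso := sq.bIso_metricBtw_wC4 hB (sq.eq_or_eq_or_eq_or_eq hB hlin)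
      exact .inr ⟨by simpa [hcard] using hiso.card_eq, hiso⟩
    · obtain ⟨p, q, hpq⟩ := hlin.exists_forall_btw hB
      refine .inl (hlin.bIso_pathBtw_of_endpoint hcard hB (p := p) fun u v h => ?_)
      by_contra! huv
      exact hsq ⟨u, p, v, q, hlin.isSquare_of_btw hB hpq h huv.1 huv.2⟩
  · rintro (h | ⟨-, h⟩)
    · exact linear_of_forall_collinearTriple (h.forall_collinearTriple collinearTriple_pathBtw)
    · exact linear_of_forall_collinearTriple
        (h.forall_collinearTriple collinearTriple_metricBtw_wC4)

end FMS
end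

section
/- For every integer c≤4 there exists a betweenness structure of order n=10−c and co-size n−c=10−2c whose triangle hypergraph is not a tight star. -/
open scoped ENNReal

namespace FMS

namespace Stmt8

def q (k : ℕ) : ℕ :=
  if k ≤ 1 then 10 else if k ≤ 3 then 11 else if k = 4 then 9 else if k = 5 then 12 else k + 8

lemma q_cases (k : ℕ) :
    (k ≤ 1 ∧ q k = 10) ∨ (2 ≤ k ∧ k ≤ 3 ∧ q k = 11) ∨ (k = 4 ∧ q k = 9) ∨
    (k = 5 ∧ q k = 12) ∨ (6 ≤ k ∧ q k = k + 8) := by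
  unfold q; split_ifs <;> omega

def spv (a b c : ℕ) : Prop :=
  ((a = 0 ∧ c = 1 ∨ a = 1 ∧ c = 0) ∧ (b = 2 ∨ b = 3 ∨ b = 4)) ∨
  ((a = 2 ∧ c = 3 ∨ a = 3 ∧ c = 2) ∧ (b = 0 ∨ b = 1 ∨ b = 5))

def bv (a b c : ℕ) : Prop :=
  a = b ∨ b = c ∨ (q a < q b ∧ q b < q c) ∨ (q c < q b ∧ q b < q a) ∨ spv a b c

def B (n : ℕ) (x y z : Fin n) : Prop := bv x.val y.val z.val

lemma spv_facts {a b c : ℕ} (h : spv a b c) :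
    q a = q c ∧ (q a = q b + 1 ∨ q b = q a + 1) ∧ a ≠ c ∧ b ≠ a ∧ b ≠ c := by
  rcases h with ⟨ha | ha, hb | hb | hb⟩ | ⟨ha | ha, hb | hb | hb⟩ <;>
    simp [ha.1, ha.2, hb, q]

set_option maxHeartbeats 2000000 in
lemma isBtw_B (n : ℕ) : IsBtw (B n) := by
  refine ⟨fun x z => Or.inl rfl, fun x y z h => ?_, fun x y z h1 h2 => ?_,
    fun x y z w h1 h2 => ?_⟩
  · unfold B bv at h ⊢
    rcases h with h|h|h|h|h
    · exact Or.inr (Or.inl h.symm)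
    · exact Or.inl h.symm
    · exact Or.inr (Or.inr (Or.inr (Or.inl h)))
    · exact Or.inr (Or.inr (Or.inl h))
    · refine Or.inr (Or.inr (Or.inr (Or.inr ?_))); unfold spv at h ⊢; tauto
  · have qx := q_cases x.val; have qy := q_cases y.val; have qz := q_cases z.val
    unfold B bv spv at h1 h2
    refine Fin.val_injective ?_
    rcases h1 with h1|h1|h1|h1|h1 <;> rcases h2 with h2|h2|h2|h2|h2 <;> omega
  · unfold B bv at h1 h2 ⊢
    rcases h1 with h1|h1|h1|h1|h1
    · -- x = y
      rcases h2 with h2|h2|h2|h2|h2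
      · exact ⟨Or.inl h2, Or.inl (by omega)⟩
      · exact ⟨Or.inl (by omega), Or.inl h2⟩
      · have hq : q x.val = q y.val := by rw [h1]
        omega
      · have hq : q x.val = q y.val := by rw [h1]
        omega
      · have := spv_facts h2; omega
    · -- y = z
      refine ⟨?_, Or.inr (Or.inl h1)⟩
      rw [h1] at h2; exact h2
    · -- strict forward
      rcases h2 with h2|h2|h2|h2|h2
      · exact ⟨Or.inl h2, by rw [← h2]; exact Or.inr (Or.inr (Or.inl h1))⟩
      · exact ⟨by rw [h2]; exact Or.inr (Or.inr (Or.inl h1)), by rw [h2]; exact Or.inl rfl⟩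
      · exact ⟨Or.inr (Or.inr (Or.inl ⟨h2.1, h2.2.trans h1.2⟩)),
          Or.inr (Or.inr (Or.inl ⟨h2.2, h1.2⟩))⟩
      · omega
      · have := spv_facts h2; omega
    · -- strict backward
      rcases h2 with h2|h2|h2|h2|h2
      · exact ⟨Or.inl h2, by rw [← h2]; exact Or.inr (Or.inr (Or.inr (Or.inl h1)))⟩
      · exact ⟨by rw [h2]; exact Or.inr (Or.inr (Or.inr (Or.inl h1))),
          by rw [h2]; exact Or.inl rfl⟩
      · omega
      · exact ⟨Or.inr (Or.inr (Or.inr (Or.inl ⟨h1.1.trans h2.1, h2.2⟩))),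
          Or.inr (Or.inr (Or.inr (Or.inl ⟨h1.1, h2.1⟩)))⟩
      · have := spv_facts h2; omega
    · -- spv
      have hf := spv_facts h1
      rcases h2 with h2|h2|h2|h2|h2
      · exact ⟨Or.inl h2, by rw [← h2]; exact Or.inr (Or.inr (Or.inr (Or.inr h1)))⟩
      · exact ⟨by rw [h2]; exact Or.inr (Or.inr (Or.inr (Or.inr h1))),
          by rw [h2]; exact Or.inl rfl⟩
      · omega
      · omega
      · have := spv_facts h2; omega


variable {n : ℕ}

set_option maxHeartbeats 3200000 in
lemma tri_fwd (h6 : 6 ≤ n) (T : Finset (Fin n)) (htri : IsTriangle (B n) T) :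
    ((∃ x : Fin n, 5 ≤ x.val ∧ T = {⟨0, by omega⟩, ⟨1, by omega⟩, x}) ∨
     (∃ x : Fin n, (x.val = 4 ∨ 6 ≤ x.val) ∧ T = {⟨2, by omega⟩, ⟨3, by omega⟩, x})) := by
  · obtain ⟨h3, hncol⟩ := htri
    obtain ⟨a, b, c, hab, hac, hbc, hT⟩ := Finset.card_eq_three.mp h3
    have hset : (T : Set (Fin n)) = {a, b, c} := by rw [hT]; simp
    have hnc : ¬ CollinearTriple (B n) a b c := fun h => hncol ⟨a, b, c, hset, h⟩
    have hab' : a.val ≠ b.val := fun h => hab (Fin.val_injective h)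
    have hac' : a.val ≠ c.val := fun h => hac (Fin.val_injective h)
    have hbc' : b.val ≠ c.val := fun h => hbc (Fin.val_injective h)
    have qa := q_cases a.val; have qb := q_cases b.val; have qc := q_cases c.val
    unfold CollinearTriple B at hnc
    have n1 : ¬ bv a.val b.val c.val := fun h => hnc (Or.inl h)
    have n2 : ¬ bv b.val a.val c.val := fun h => hnc (Or.inr (Or.inl h))
    have n3 : ¬ bv a.val c.val b.val := fun h => hnc (Or.inr (Or.inr h))
    have sb : ¬ (q a.val < q b.val ∧ q b.val < q c.val) :=
      fun h => n1 (Or.inr (Or.inr (Or.inl h)))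
    have sb' : ¬ (q c.val < q b.val ∧ q b.val < q a.val) :=
      fun h => n1 (Or.inr (Or.inr (Or.inr (Or.inl h))))
    have sa : ¬ (q b.val < q a.val ∧ q a.val < q c.val) :=
      fun h => n2 (Or.inr (Or.inr (Or.inl h)))
    have sa' : ¬ (q c.val < q a.val ∧ q a.val < q b.val) :=
      fun h => n2 (Or.inr (Or.inr (Or.inr (Or.inl h))))
    have sc : ¬ (q a.val < q c.val ∧ q c.val < q b.val) :=
      fun h => n3 (Or.inr (Or.inr (Or.inl h)))
    have sc' : ¬ (q b.val < q c.val ∧ q c.val < q a.val) :=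
      fun h => n3 (Or.inr (Or.inr (Or.inr (Or.inl h))))
    have nspb : ¬ spv a.val b.val c.val := fun h => n1 (Or.inr (Or.inr (Or.inr (Or.inr h))))
    have nspa : ¬ spv b.val a.val c.val := fun h => n2 (Or.inr (Or.inr (Or.inr (Or.inr h))))
    have nspc : ¬ spv a.val c.val b.val := fun h => n3 (Or.inr (Or.inr (Or.inr (Or.inr h))))
    have qeq : q a.val = q b.val ∨ q a.val = q c.val ∨ q b.val = q c.val := by
      clear hnc n1 n2 n3 nspa nspb nspc; omega
    clear sa sa' sb sb' sc sc'
    rcases qeq with hq | hq | hq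
    · have hp : (a.val ≤ 1 ∧ b.val ≤ 1) ∨
          (2 ≤ a.val ∧ a.val ≤ 3 ∧ 2 ≤ b.val ∧ b.val ≤ 3) := by
        clear hnc n1 n2 n3 nspa nspb nspc; omega
      rcases hp with hp | hp
      · have hv2 : (a.val = 0 ∧ b.val = 1) ∨ (a.val = 1 ∧ b.val = 0) := by
          clear hnc n1 n2 n3 nspa nspb nspc; omega
        rcases hv2 with h | h
        · have hw : 5 ≤ c.val := by
            by_contra hcon
            refine nspc (Or.inl ⟨?_, ?_⟩) <;> { clear hnc n1 n2 n3 nspa nspb nspc; omega }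
          clear hnc n1 n2 n3 nspa nspb nspc qa qb qc
          refine Or.inl ⟨c, hw, ?_⟩
          have hu : a = (⟨0, by omega⟩ : Fin n) := Fin.ext (by simp [h.1])
          have hv : b = (⟨1, by omega⟩ : Fin n) := Fin.ext (by simp [h.2])
          rw [hT, hu, hv]
          all_goals
            ext t
            simp only [Finset.mem_insert, Finset.mem_singleton]
            tauto
        · have hw : 5 ≤ c.val := by
            by_contra hcon
            refine nspc (Or.inl ⟨?_, ?_⟩) <;> { clear hnc n1 n2 n3 nspa nspb nspc; omega }
          clear hnc n1 n2 n3 nspa nspb nspc qa qb qc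
          refine Or.inl ⟨c, hw, ?_⟩
          have hu : b = (⟨0, by omega⟩ : Fin n) := Fin.ext (by simp [h.2])
          have hv : a = (⟨1, by omega⟩ : Fin n) := Fin.ext (by simp [h.1])
          rw [hT, hu, hv]
          all_goals
            ext t
            simp only [Finset.mem_insert, Finset.mem_singleton]
            tauto
      · have hv2 : (a.val = 2 ∧ b.val = 3) ∨ (a.val = 3 ∧ b.val = 2) := by
          clear hnc n1 n2 n3 nspa nspb nspc; omega
        rcases hv2 with h | h
        · have hw : (c.val = 4 ∨ 6 ≤ c.val) := by
            by_contra hcon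
            refine nspc (Or.inr ⟨?_, ?_⟩) <;> { clear hnc n1 n2 n3 nspa nspb nspc; omega }
          clear hnc n1 n2 n3 nspa nspb nspc qa qb qc
          refine Or.inr ⟨c, hw, ?_⟩
          have hu : a = (⟨2, by omega⟩ : Fin n) := Fin.ext (by simp [h.1])
          have hv : b = (⟨3, by omega⟩ : Fin n) := Fin.ext (by simp [h.2])
          rw [hT, hu, hv]
          all_goals
            ext t
            simp only [Finset.mem_insert, Finset.mem_singleton]
            tauto
        · have hw : (c.val = 4 ∨ 6 ≤ c.val) := by
            by_contra hcon
            refine nspc (Or.inr ⟨?_, ?_⟩) <;> { clear hnc n1 n2 n3 nspa nspb nspc; omega }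
          clear hnc n1 n2 n3 nspa nspb nspc qa qb qc
          refine Or.inr ⟨c, hw, ?_⟩
          have hu : b = (⟨2, by omega⟩ : Fin n) := Fin.ext (by simp [h.2])
          have hv : a = (⟨3, by omega⟩ : Fin n) := Fin.ext (by simp [h.1])
          rw [hT, hu, hv]
          all_goals
            ext t
            simp only [Finset.mem_insert, Finset.mem_singleton]
            tauto
    · have hp : (a.val ≤ 1 ∧ c.val ≤ 1) ∨
          (2 ≤ a.val ∧ a.val ≤ 3 ∧ 2 ≤ c.val ∧ c.val ≤ 3) := by
        clear hnc n1 n2 n3 nspa nspb nspc; omega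
      rcases hp with hp | hp
      · have hv2 : (a.val = 0 ∧ c.val = 1) ∨ (a.val = 1 ∧ c.val = 0) := by
          clear hnc n1 n2 n3 nspa nspb nspc; omega
        rcases hv2 with h | h
        · have hw : 5 ≤ b.val := by
            by_contra hcon
            refine nspb (Or.inl ⟨?_, ?_⟩) <;> { clear hnc n1 n2 n3 nspa nspb nspc; omega }
          clear hnc n1 n2 n3 nspa nspb nspc qa qb qc
          refine Or.inl ⟨b, hw, ?_⟩
          have hu : a = (⟨0, by omega⟩ : Fin n) := Fin.ext (by simp [h.1])
          have hv : c = (⟨1, by omega⟩ : Fin n) := Fin.ext (by simp [h.2])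
          rw [hT, hu, hv]
          all_goals
            ext t
            simp only [Finset.mem_insert, Finset.mem_singleton]
            tauto
        · have hw : 5 ≤ b.val := by
            by_contra hcon
            refine nspb (Or.inl ⟨?_, ?_⟩) <;> { clear hnc n1 n2 n3 nspa nspb nspc; omega }
          clear hnc n1 n2 n3 nspa nspb nspc qa qb qc
          refine Or.inl ⟨b, hw, ?_⟩
          have hu : c = (⟨0, by omega⟩ : Fin n) := Fin.ext (by simp [h.2])
          have hv : a = (⟨1, by omega⟩ : Fin n) := Fin.ext (by simp [h.1])
          rw [hT, hu, hv]
          all_goals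
            ext t
            simp only [Finset.mem_insert, Finset.mem_singleton]
            tauto
      · have hv2 : (a.val = 2 ∧ c.val = 3) ∨ (a.val = 3 ∧ c.val = 2) := by
          clear hnc n1 n2 n3 nspa nspb nspc; omega
        rcases hv2 with h | h
        · have hw : (b.val = 4 ∨ 6 ≤ b.val) := by
            by_contra hcon
            refine nspb (Or.inr ⟨?_, ?_⟩) <;> { clear hnc n1 n2 n3 nspa nspb nspc; omega }
          clear hnc n1 n2 n3 nspa nspb nspc qa qb qc
          refine Or.inr ⟨b, hw, ?_⟩
          have hu : a = (⟨2, by omega⟩ : Fin n) := Fin.ext (by simp [h.1])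
          have hv : c = (⟨3, by omega⟩ : Fin n) := Fin.ext (by simp [h.2])
          rw [hT, hu, hv]
          all_goals
            ext t
            simp only [Finset.mem_insert, Finset.mem_singleton]
            tauto
        · have hw : (b.val = 4 ∨ 6 ≤ b.val) := by
            by_contra hcon
            refine nspb (Or.inr ⟨?_, ?_⟩) <;> { clear hnc n1 n2 n3 nspa nspb nspc; omega }
          clear hnc n1 n2 n3 nspa nspb nspc qa qb qc
          refine Or.inr ⟨b, hw, ?_⟩
          have hu : c = (⟨2, by omega⟩ : Fin n) := Fin.ext (by simp [h.2])
          have hv : a = (⟨3, by omega⟩ : Fin n) := Fin.ext (by simp [h.1])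
          rw [hT, hu, hv]
          all_goals
            ext t
            simp only [Finset.mem_insert, Finset.mem_singleton]
            tauto
    · have hp : (b.val ≤ 1 ∧ c.val ≤ 1) ∨
          (2 ≤ b.val ∧ b.val ≤ 3 ∧ 2 ≤ c.val ∧ c.val ≤ 3) := by
        clear hnc n1 n2 n3 nspa nspb nspc; omega
      rcases hp with hp | hp
      · have hv2 : (b.val = 0 ∧ c.val = 1) ∨ (b.val = 1 ∧ c.val = 0) := by
          clear hnc n1 n2 n3 nspa nspb nspc; omega
        rcases hv2 with h | h
        · have hw : 5 ≤ a.val := by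
            by_contra hcon
            refine nspa (Or.inl ⟨?_, ?_⟩) <;> { clear hnc n1 n2 n3 nspa nspb nspc; omega }
          clear hnc n1 n2 n3 nspa nspb nspc qa qb qc
          refine Or.inl ⟨a, hw, ?_⟩
          have hu : b = (⟨0, by omega⟩ : Fin n) := Fin.ext (by simp [h.1])
          have hv : c = (⟨1, by omega⟩ : Fin n) := Fin.ext (by simp [h.2])
          rw [hT, hu, hv]
          all_goals
            ext t
            simp only [Finset.mem_insert, Finset.mem_singleton]
            tauto
        · have hw : 5 ≤ a.val := by
            by_contra hcon
            refine nspa (Or.inl ⟨?_, ?_⟩) <;> { clear hnc n1 n2 n3 nspa nspb nspc; omega }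
          clear hnc n1 n2 n3 nspa nspb nspc qa qb qc
          refine Or.inl ⟨a, hw, ?_⟩
          have hu : c = (⟨0, by omega⟩ : Fin n) := Fin.ext (by simp [h.2])
          have hv : b = (⟨1, by omega⟩ : Fin n) := Fin.ext (by simp [h.1])
          rw [hT, hu, hv]
          all_goals
            ext t
            simp only [Finset.mem_insert, Finset.mem_singleton]
            tauto
      · have hv2 : (b.val = 2 ∧ c.val = 3) ∨ (b.val = 3 ∧ c.val = 2) := by
          clear hnc n1 n2 n3 nspa nspb nspc; omega
        rcases hv2 with h | h
        · have hw : (a.val = 4 ∨ 6 ≤ a.val) := by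
            by_contra hcon
            refine nspa (Or.inr ⟨?_, ?_⟩) <;> { clear hnc n1 n2 n3 nspa nspb nspc; omega }
          clear hnc n1 n2 n3 nspa nspb nspc qa qb qc
          refine Or.inr ⟨a, hw, ?_⟩
          have hu : b = (⟨2, by omega⟩ : Fin n) := Fin.ext (by simp [h.1])
          have hv : c = (⟨3, by omega⟩ : Fin n) := Fin.ext (by simp [h.2])
          rw [hT, hu, hv]
          all_goals
            ext t
            simp only [Finset.mem_insert, Finset.mem_singleton]
            tauto
        · have hw : (a.val = 4 ∨ 6 ≤ a.val) := by
            by_contra hcon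
            refine nspa (Or.inr ⟨?_, ?_⟩) <;> { clear hnc n1 n2 n3 nspa nspb nspc; omega }
          clear hnc n1 n2 n3 nspa nspb nspc qa qb qc
          refine Or.inr ⟨a, hw, ?_⟩
          have hu : c = (⟨2, by omega⟩ : Fin n) := Fin.ext (by simp [h.2])
          have hv : b = (⟨3, by omega⟩ : Fin n) := Fin.ext (by simp [h.1])
          rw [hT, hu, hv]
          all_goals
            ext t
            simp only [Finset.mem_insert, Finset.mem_singleton]
            tauto


lemma q_le1 {k : ℕ} (h : k ≤ 1) : q k = 10 := by unfold q; split_ifs <;> omega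

lemma q_23 {k : ℕ} (h2 : 2 ≤ k) (h3 : k ≤ 3) : q k = 11 := by unfold q; split_ifs <;> omega

set_option maxHeartbeats 1000000 in
lemma tri_bwd (h6 : 6 ≤ n) (T : Finset (Fin n))
    (h : (∃ x : Fin n, 5 ≤ x.val ∧ T = {⟨0, by omega⟩, ⟨1, by omega⟩, x}) ∨
      (∃ x : Fin n, (x.val = 4 ∨ 6 ≤ x.val) ∧ T = {⟨2, by omega⟩, ⟨3, by omega⟩, x})) :
    IsTriangle (B n) T := by
  obtain (⟨x, hx, rfl⟩ | ⟨x, hx, rfl⟩) := h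
  · constructor
    · rw [Finset.card_insert_of_notMem (by simp [Fin.ext_iff]; omega),
        Finset.card_insert_of_notMem (by simp [Fin.ext_iff]; omega), Finset.card_singleton]
    · rintro ⟨p, u, r, hset, hcol⟩
      have vp : p.val = 0 ∨ p.val = 1 ∨ p.val = x.val := by
        have hm : p ∈ ({p, u, r} : Set (Fin n)) := by simp
        rw [← hset] at hm; simpa [Fin.ext_iff] using hm
      have vu : u.val = 0 ∨ u.val = 1 ∨ u.val = x.val := by
        have hm : u ∈ ({p, u, r} : Set (Fin n)) := by simp
        rw [← hset] at hm; simpa [Fin.ext_iff] using hm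
      have vr : r.val = 0 ∨ r.val = 1 ∨ r.val = x.val := by
        have hm : r ∈ ({p, u, r} : Set (Fin n)) := by simp
        rw [← hset] at hm; simpa [Fin.ext_iff] using hm
      have m0 : 0 = p.val ∨ 0 = u.val ∨ 0 = r.val := by
        have hm : (⟨0, by omega⟩ : Fin n) ∈ ({p, u, r} : Set (Fin n)) := by
          rw [← hset]; simp
        simpa [Fin.ext_iff, eq_comm] using hm
      have m1 : 1 = p.val ∨ 1 = u.val ∨ 1 = r.val := by
        have hm : (⟨1, by omega⟩ : Fin n) ∈ ({p, u, r} : Set (Fin n)) := by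
          rw [← hset]; simp
        simpa [Fin.ext_iff, eq_comm] using hm
      have mx : x.val = p.val ∨ x.val = u.val ∨ x.val = r.val := by
        have hm : x ∈ ({p, u, r} : Set (Fin n)) := by rw [← hset]; simp
        simpa [Fin.ext_iff] using hm
      have dpu : p.val ≠ u.val := by omega
      have dpr : p.val ≠ r.val := by omega
      have dur : u.val ≠ r.val := by omega
      have ip : p.val ≤ 1 → q p.val = 10 := fun h => q_le1 h
      have iu : u.val ≤ 1 → q u.val = 10 := fun h => q_le1 h
      have ir : r.val ≤ 1 → q r.val = 10 := fun h => q_le1 h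
      have qeq2 : q p.val = q u.val ∨ q p.val = q r.val ∨ q u.val = q r.val := by omega
      clear m0 m1 mx ip iu ir hset
      unfold CollinearTriple B bv spv at hcol
      omega
  · constructor
    · rw [Finset.card_insert_of_notMem (by simp [Fin.ext_iff]; omega),
        Finset.card_insert_of_notMem (by simp [Fin.ext_iff]; omega), Finset.card_singleton]
    · rintro ⟨p, u, r, hset, hcol⟩
      have vp : p.val = 2 ∨ p.val = 3 ∨ p.val = x.val := by
        have hm : p ∈ ({p, u, r} : Set (Fin n)) := by simp
        rw [← hset] at hm; simpa [Fin.ext_iff] using hm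
      have vu : u.val = 2 ∨ u.val = 3 ∨ u.val = x.val := by
        have hm : u ∈ ({p, u, r} : Set (Fin n)) := by simp
        rw [← hset] at hm; simpa [Fin.ext_iff] using hm
      have vr : r.val = 2 ∨ r.val = 3 ∨ r.val = x.val := by
        have hm : r ∈ ({p, u, r} : Set (Fin n)) := by simp
        rw [← hset] at hm; simpa [Fin.ext_iff] using hm
      have m0 : 2 = p.val ∨ 2 = u.val ∨ 2 = r.val := by
        have hm : (⟨2, by omega⟩ : Fin n) ∈ ({p, u, r} : Set (Fin n)) := by
          rw [← hset]; simp
        simpa [Fin.ext_iff, eq_comm] using hm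
      have m1 : 3 = p.val ∨ 3 = u.val ∨ 3 = r.val := by
        have hm : (⟨3, by omega⟩ : Fin n) ∈ ({p, u, r} : Set (Fin n)) := by
          rw [← hset]; simp
        simpa [Fin.ext_iff, eq_comm] using hm
      have mx : x.val = p.val ∨ x.val = u.val ∨ x.val = r.val := by
        have hm : x ∈ ({p, u, r} : Set (Fin n)) := by rw [← hset]; simp
        simpa [Fin.ext_iff] using hm
      have dpu : p.val ≠ u.val := by omega
      have dpr : p.val ≠ r.val := by omega
      have dur : u.val ≠ r.val := by omega
      have ip : 2 ≤ p.val → p.val ≤ 3 → q p.val = 11 := fun h h' => q_23 h h'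
      have iu : 2 ≤ u.val → u.val ≤ 3 → q u.val = 11 := fun h h' => q_23 h h'
      have ir : 2 ≤ r.val → r.val ≤ 3 → q r.val = 11 := fun h h' => q_23 h h'
      have qeq2 : q p.val = q u.val ∨ q p.val = q r.val ∨ q u.val = q r.val := by omega
      clear m0 m1 mx ip iu ir hset
      unfold CollinearTriple B bv spv at hcol
      omega


lemma coSize_eq (h6 : 6 ≤ n) : coSize (B n) = 2 * n - 10 := by
  classical
  have hset : {T : Finset (Fin n) | IsTriangle (B n) T} =
      ↑(((Finset.univ.filter fun x : Fin n => 5 ≤ x.val).image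
          (fun x => ({⟨0, by omega⟩, ⟨1, by omega⟩, x} : Finset (Fin n)))) ∪
        ((Finset.univ.filter fun x : Fin n => x.val = 4 ∨ 6 ≤ x.val).image
          (fun x => ({⟨2, by omega⟩, ⟨3, by omega⟩, x} : Finset (Fin n))))) := by
    ext T
    simp only [Set.mem_setOf_eq, Finset.coe_union, Set.mem_union, Finset.mem_coe,
      Finset.mem_image, Finset.mem_filter, Finset.mem_univ, true_and]
    constructor
    · intro htri
      rcases tri_fwd h6 T htri with ⟨x, hx, hT⟩ | ⟨x, hx, hT⟩
      · exact Or.inl ⟨x, hx, hT.symm⟩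
      · exact Or.inr ⟨x, hx, hT.symm⟩
    · rintro (⟨x, hx, hT⟩ | ⟨x, hx, hT⟩)
      · exact tri_bwd h6 T (Or.inl ⟨x, hx, hT.symm⟩)
      · exact tri_bwd h6 T (Or.inr ⟨x, hx, hT.symm⟩)
  rw [coSize, hset, Set.ncard_coe_finset]
  rw [Finset.card_union_of_disjoint]
  · rw [Finset.card_image_of_injOn, Finset.card_image_of_injOn]
    · have c1 : (Finset.univ.filter fun x : Fin n => 5 ≤ x.val).card = (Finset.Ico 5 n).card := by
        apply Finset.card_bij (fun x _ => x.val)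
        · intro a ha
          simp only [Finset.mem_filter, Finset.mem_univ, true_and] at ha
          simp only [Finset.mem_Ico]
          exact ⟨ha, a.isLt⟩
        · intro a _ b _ hab
          exact Fin.val_injective hab
        · intro b hb
          simp only [Finset.mem_Ico] at hb
          exact ⟨⟨b, hb.2⟩, by simp [Finset.mem_filter, hb.1], rfl⟩
      have c2 : (Finset.univ.filter fun x : Fin n => x.val = 4 ∨ 6 ≤ x.val).card
          = (insert 4 (Finset.Ico 6 n)).card := by
        apply Finset.card_bij (fun x _ => x.val)
        · intro a ha
          simp only [Finset.mem_filter, Finset.mem_univ, true_and] at ha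
          have := a.isLt
          simp only [Finset.mem_insert, Finset.mem_Ico]
          omega
        · intro a _ b _ hab
          exact Fin.val_injective hab
        · intro b hb
          simp only [Finset.mem_insert, Finset.mem_Ico] at hb
          refine ⟨⟨b, by omega⟩, by simp [Finset.mem_filter]; omega, rfl⟩
      rw [c1, c2, Finset.card_insert_of_notMem (by simp), Nat.card_Ico, Nat.card_Ico]
      omega
    · intro x hx y hy hxy
      simp only [Finset.coe_filter, Finset.mem_univ, true_and, Set.mem_setOf_eq] at hx hy
      replace hxy : ({⟨2, by omega⟩, ⟨3, by omega⟩, x} : Finset (Fin n))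
          = {⟨2, by omega⟩, ⟨3, by omega⟩, y} := hxy
      have : x ∈ ({⟨2, by omega⟩, ⟨3, by omega⟩, y} : Finset (Fin n)) := by
        rw [← hxy]; simp
      simp only [Finset.mem_insert, Finset.mem_singleton, Fin.ext_iff] at this
      exact Fin.val_injective (by omega)
    · intro x hx y hy hxy
      simp only [Finset.coe_filter, Finset.mem_univ, true_and, Set.mem_setOf_eq] at hx hy
      replace hxy : ({⟨0, by omega⟩, ⟨1, by omega⟩, x} : Finset (Fin n))
          = {⟨0, by omega⟩, ⟨1, by omega⟩, y} := hxy
      have : x ∈ ({⟨0, by omega⟩, ⟨1, by omega⟩, y} : Finset (Fin n)) := by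
        rw [← hxy]; simp
      simp only [Finset.mem_insert, Finset.mem_singleton, Fin.ext_iff] at this
      exact Fin.val_injective (by omega)
  · rw [Finset.disjoint_left]
    rintro T hT1 hT2
    simp only [Finset.mem_image, Finset.mem_filter, Finset.mem_univ, true_and] at hT1 hT2
    obtain ⟨x, hx, rfl⟩ := hT1
    obtain ⟨y, hy, hEq⟩ := hT2
    have h0 : (⟨0, by omega⟩ : Fin n) ∈ ({⟨2, by omega⟩, ⟨3, by omega⟩, y} : Finset (Fin n)) := by
      rw [hEq]; simp
    simp only [Finset.mem_insert, Finset.mem_singleton, Fin.ext_iff] at h0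
    omega

lemma not_tight (h6 : 6 ≤ n) : ¬ TightStar (B n) := by
  have hE : IsTriangle (B n) ({⟨0, by omega⟩, ⟨1, by omega⟩, ⟨5, by omega⟩} : Finset (Fin n)) :=
    tri_bwd h6 _ (Or.inl ⟨⟨5, by omega⟩, by simp, rfl⟩)
  have hF : IsTriangle (B n) ({⟨2, by omega⟩, ⟨3, by omega⟩, ⟨4, by omega⟩} : Finset (Fin n)) :=
    tri_bwd h6 _ (Or.inr ⟨⟨4, by omega⟩, Or.inl rfl, rfl⟩)
  have hne : ({⟨0, by omega⟩, ⟨1, by omega⟩, ⟨5, by omega⟩} : Finset (Fin n))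
      ≠ ({⟨2, by omega⟩, ⟨3, by omega⟩, ⟨4, by omega⟩} : Finset (Fin n)) := by
    intro hcon
    have : (⟨0, by omega⟩ : Fin n) ∈
        ({⟨2, by omega⟩, ⟨3, by omega⟩, ⟨4, by omega⟩} : Finset (Fin n)) := by
      rw [← hcon]; simp
    simp only [Finset.mem_insert, Finset.mem_singleton, Fin.ext_iff] at this
    omega
  rintro (hsub | ⟨K, hK2, hK⟩)
  · exact hne (hsub hE hF)
  · have h0 := hK _ _ hE hF hne
    have hempty : ((↑({⟨0, by omega⟩, ⟨1, by omega⟩, ⟨5, by omega⟩} : Finset (Fin n)) : Set (Fin n))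
        ∩ ↑({⟨2, by omega⟩, ⟨3, by omega⟩, ⟨4, by omega⟩} : Finset (Fin n))) = ∅ := by
      ext t
      simp only [Set.mem_inter_iff, Finset.coe_insert, Finset.coe_singleton,
        Set.mem_insert_iff, Set.mem_singleton_iff, Set.mem_empty_iff_false, iff_false,
        not_and, Fin.ext_iff]
      omega
    rw [hempty] at h0
    rw [← h0] at hK2
    simp at hK2


end Stmt8

/-- for every integer `c ≤ 4` there is a betweenness structure of order
`n = 10 - c` and co-size `n - c = 10 - 2c` whose triangle hypergraph is not a tight star. -/
theorem stmt8 (c : ℤ) (hc : c ≤ 4) :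
    ∃ (X : Type) (inst : Fintype X) (btw : X → X → X → Prop),
      IsBtw btw ∧ (@Fintype.card X inst : ℤ) = 10 - c ∧
      (coSize btw : ℤ) = 10 - 2 * c ∧ ¬ TightStar btw := by
  have h6 : 6 ≤ (10 - c).toNat := by omega
  refine ⟨Fin ((10 - c).toNat), inferInstance, Stmt8.B _, Stmt8.isBtw_B _, ?_, ?_,
    Stmt8.not_tight h6⟩
  · rw [Fintype.card_fin]; omega
  · rw [Stmt8.coSize_eq h6]
    omega


end FMS
end

section
/- Let Φ be a hereditary class of betweenness structures and suppose there exists an integer c≥2 such that every nonlinear betweenness structure of order c+2 belonging to Φ has co-size at least 2. Then for every n≥3, every nonlinear betweenness structure of order n belonging to Φ has co-size at least n−c. -/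
open scoped ENNReal

namespace FMS

section Aux
variable {X : Type*}

lemma collinearSet_map (btw : X → X → X → Prop) (Y : Set X) (T : Finset Y) :
    CollinearSet (fun a b c : Y => btw a.1 b.1 c.1) T ↔
      CollinearSet btw (T.map (Function.Embedding.subtype (· ∈ Y))) := by
  constructor
  · rintro ⟨x, y, z, hset, hcol⟩
    refine ⟨x.1, y.1, z.1, ?_, hcol⟩
    rw [Finset.coe_map, hset]
    simp [Set.image_insert_eq]
  · rintro ⟨x, y, z, hset, hcol⟩
    rw [Finset.coe_map] at hset
    simp only [Function.Embedding.coe_subtype] at hset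
    have hx : x ∈ Subtype.val '' (T : Set Y) := by rw [hset]; simp
    have hy : y ∈ Subtype.val '' (T : Set Y) := by rw [hset]; simp
    have hz : z ∈ Subtype.val '' (T : Set Y) := by rw [hset]; simp
    obtain ⟨a, ha, rfl⟩ := hx
    obtain ⟨b, hb, rfl⟩ := hy
    obtain ⟨c, hc, rfl⟩ := hz
    refine ⟨a, b, c, ?_, hcol⟩
    apply Set.image_injective.mpr Subtype.val_injective
    rw [hset]; simp [Set.image_insert_eq]

lemma isTriangle_map (btw : X → X → X → Prop) (Y : Set X) (T : Finset Y) :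
    IsTriangle (fun a b c : Y => btw a.1 b.1 c.1) T ↔
      IsTriangle btw (T.map (Function.Embedding.subtype (· ∈ Y))) := by
  unfold IsTriangle
  rw [Finset.card_map, collinearSet_map]

lemma exists_lift (Y : Set X) (F : Finset X) (hF : ↑F ⊆ Y) :
    ∃ T : Finset Y, T.map (Function.Embedding.subtype (· ∈ Y)) = F := by
  classical
  exact ⟨F.subtype (· ∈ Y), by
    rw [Finset.subtype_map, Finset.filter_true_of_mem (fun x hx => hF hx)]⟩

/-- Restriction of a betweenness structure satisfies the axioms. -/
lemma isBtw_restrict {btw : X → X → X → Prop} (h : IsBtw btw) (Y : Set X) :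
    IsBtw (fun a b c : Y => btw a.1 b.1 c.1) :=
  ⟨fun x z => h.1 x.1 z.1, fun x y z hb => h.2.1 _ _ _ hb,
   fun x y z hb hb' => Subtype.ext (h.2.2.1 _ _ _ hb hb'),
   fun x y z w hb hb' => h.2.2.2 _ _ _ _ hb hb'⟩

/-- A nonlinear structure has a triangle. -/
lemma exists_triangle {btw : X → X → X → Prop} (h : ¬ Linear btw) :
    ∃ T : Finset X, IsTriangle btw T := by
  unfold Linear at h
  push_neg at h
  obtain ⟨T, h1, h2⟩ := h
  exact ⟨T, h1, h2⟩

/-- If a triangle lies in `Y`, the induced substructure on `Y` is nonlinear. -/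
lemma not_linear_restrict {btw : X → X → X → Prop} {Y : Set X} {F : Finset X}
    (hF : IsTriangle btw F) (hFY : ↑F ⊆ Y) :
    ¬ Linear (fun a b c : Y => btw a.1 b.1 c.1) := by
  obtain ⟨T, hT⟩ := exists_lift Y F hFY
  intro hlin
  have htri : IsTriangle (fun a b c : Y => btw a.1 b.1 c.1) T := by
    rw [isTriangle_map, hT]; exact hF
  exact htri.2 (hlin T htri.1)

/-- If `X` is finite and some triangle does not lie in `Y`, deleting the complement of
`Y` loses at least one triangle. -/
lemma coSize_restrict_lt [Fintype X] (btw : X → X → X → Prop) (Y : Set X)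
    {E : Finset X} (hE : IsTriangle btw E) (hEY : ¬ (↑E : Set X) ⊆ Y) :
    coSize (fun a b c : Y => btw a.1 b.1 c.1) + 1 ≤ coSize btw := by
  classical
  unfold coSize
  set g : Finset Y → Finset X := fun T => T.map (Function.Embedding.subtype (· ∈ Y)) with hg
  have hginj : Function.Injective g := Finset.map_injective _
  set SY := {T : Finset Y | IsTriangle (fun a b c : Y => btw a.1 b.1 c.1) T} with hSY
  have himg : g '' SY ⊆ {T : Finset X | IsTriangle btw T} := by
    rintro _ ⟨T, hT, rfl⟩
    exact (isTriangle_map btw Y T).mp hT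
  have hEnot : E ∉ g '' SY := by
    rintro ⟨T, hT, rfl⟩
    refine hEY ?_
    rw [hg, Finset.coe_map]
    exact Subtype.coe_image_subset Y ↑T
  calc SY.ncard + 1 = (insert E (g '' SY)).ncard := by
        rw [Set.ncard_insert_of_notMem hEnot (Set.toFinite _),
          Set.ncard_image_of_injective _ hginj]
      _ ≤ _ := Set.ncard_le_ncard (Set.insert_subset_iff.mpr ⟨(by exact hE), himg⟩) (Set.toFinite _)

/-- The order of an induced substructure is the size of the underlying set. -/
lemma card_coe_set [Fintype X] (Y : Set X) [Fintype Y] :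
    Fintype.card Y = Y.ncard := by
  rw [← Nat.card_eq_fintype_card, Nat.card_coe_set_eq]

end Aux

/-- if `Φ` is hereditary and there is `c ≥ 2` such that every nonlinear
member of `Φ` of order `c + 2` has co-size at least `2`, then for all `n ≥ 3` every
nonlinear member of `Φ` of order `n` has co-size at least `n - c`. -/
theorem stmt14 (Φ : ∀ X : Type, (X → X → X → Prop) → Prop) (hΦ : Hereditary Φ)
    (c : ℕ) (hc : 2 ≤ c)
    (hbase : ∀ (X : Type) [Fintype X] (btw : X → X → X → Prop),
        IsBtw btw → Fintype.card X = c + 2 → Φ X btw → ¬ Linear btw → 2 ≤ coSize btw) :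
    ∀ n : ℕ, 3 ≤ n →
      ∀ (X : Type) [Fintype X] (btw : X → X → X → Prop),
        IsBtw btw → Fintype.card X = n → Φ X btw → ¬ Linear btw →
        n - c ≤ coSize btw := by
  classical
  intro n
  induction n using Nat.strong_induction_on with
  | _ n IH =>
  intro hn X _ btw hbtwX hcard hPhiX hnl
  obtain ⟨T₀, hT₀⟩ := exists_triangle hnl
  have hSfin : {T : Finset X | IsTriangle btw T}.Finite := Set.toFinite _
  have hEF : c + 2 ≤ n → ∃ E F : Finset X, IsTriangle btw E ∧ IsTriangle btw F ∧ E ≠ F := by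
    intro hcn
    obtain ⟨t, hT₀t, htcard⟩ := Finset.exists_superset_card_eq (s := T₀) (n := c + 2)
      (by rw [hT₀.1]; omega) (by rw [hcard]; exact hcn)
    have hYne : (↑t : Set X).Nonempty := by
      rw [Finset.coe_nonempty, ← Finset.card_pos, htcard]; omega
    have hPhiY : Φ ↑t (fun a b c : (↑t : Set X) => btw a.1 b.1 c.1) :=
      hΦ.2 X btw ↑t hYne hPhiX
    have hcardY : Fintype.card (↑t : Set X) = c + 2 := by
      rw [card_coe_set, Set.ncard_coe_finset, htcard]
    have hnlY : ¬ Linear (fun a b c : (↑t : Set X) => btw a.1 b.1 c.1) :=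
      not_linear_restrict hT₀ (by exact_mod_cast hT₀t)
    have h2 := hbase ↑t (fun a b c : (↑t : Set X) => btw a.1 b.1 c.1)
      (isBtw_restrict hbtwX ↑t) hcardY hPhiY hnlY
    rw [coSize] at h2
    obtain ⟨E', F', hE', hF', hEF'⟩ :=
      (Set.one_lt_ncard_iff (Set.toFinite _)).mp (lt_of_lt_of_le one_lt_two h2)
    refine ⟨E'.map (Function.Embedding.subtype (· ∈ (↑t : Set X))),
      F'.map (Function.Embedding.subtype (· ∈ (↑t : Set X))),
      (isTriangle_map btw ↑t E').mp hE', (isTriangle_map btw ↑t F').mp hF', ?_⟩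
    intro h
    exact hEF' (Finset.map_injective _ h)
  rcases lt_or_ge n (c + 2) with h1 | h1
  · have : 0 < coSize btw := by
      rw [coSize]
      exact (Set.ncard_pos hSfin).mpr ⟨T₀, hT₀⟩
    omega
  rcases eq_or_lt_of_le h1 with h2 | h2
  · have := hbase X btw hbtwX (by omega) hPhiX hnl
    omega
  obtain ⟨E, F, hE, hF, hEFne⟩ := hEF h1
  have hx : ∃ x ∈ E, x ∉ F := by
    by_contra hsub
    push_neg at hsub
    exact hEFne (Finset.eq_of_subset_of_card_le hsub (by rw [hE.1, hF.1]))
  obtain ⟨x, hxE, hxF⟩ := hx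
  have hncY : ({x}ᶜ : Set X).ncard = n - 1 := by
    have h3 := Set.ncard_add_ncard_compl ({x} : Set X) (Set.toFinite _) (Set.toFinite _)
    rw [Set.ncard_singleton, Nat.card_eq_fintype_card, hcard] at h3
    omega
  letI : Fintype ({x}ᶜ : Set X) := (Set.toFinite _).fintype
  have hcardY : Fintype.card ({x}ᶜ : Set X) = n - 1 := by
    rw [card_coe_set, hncY]
  have hYne : ({x}ᶜ : Set X).Nonempty := by
    rw [← Set.ncard_pos (Set.toFinite _), hncY]; omega
  have hFY : (↑F : Set X) ⊆ {x}ᶜ := by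
    intro a ha
    simp only [Set.mem_compl_iff, Set.mem_singleton_iff]
    rintro rfl
    exact hxF ha
  have hnlY : ¬ Linear (fun a b c : ({x}ᶜ : Set X) => btw a.1 b.1 c.1) :=
    not_linear_restrict hF hFY
  have hPhiY : Φ ↑({x}ᶜ : Set X) (fun a b c : ({x}ᶜ : Set X) => btw a.1 b.1 c.1) :=
    hΦ.2 X btw {x}ᶜ hYne hPhiX
  have hIH : (n - 1) - c ≤ coSize (fun a b c : ({x}ᶜ : Set X) => btw a.1 b.1 c.1) :=
    IH (n - 1) (by omega) (by omega) ↑({x}ᶜ : Set X)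
      (fun a b c : ({x}ᶜ : Set X) => btw a.1 b.1 c.1)
      (isBtw_restrict hbtwX {x}ᶜ) hcardY hPhiY hnlY
  have hEY : ¬ (↑E : Set X) ⊆ ({x}ᶜ : Set X) := by
    intro h
    exact (h (by exact_mod_cast hxE)) rfl
  have hcount := coSize_restrict_lt btw {x}ᶜ hE hEY
  omega


end FMS
end

section
/- Let c and n be integers with n>2c−1 and let B be a nonlinear betweenness structure of order n and co-size n−c on ground set X such that every point x∈X satisfies d_B(x)=n−c or d_B(x)≤1. Then the triangle hypergraph H(B) is a tight star. -/
open scoped ENNReal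

namespace FMS

open Finset

section UniformHypergraph

variable {X : Type*} [DecidableEq X]

def degree (𝒯 : Finset (Finset X)) (x : X) : ℕ := #{T ∈ 𝒯 | x ∈ T}

lemma degree_eq_card_iff {𝒯 : Finset (Finset X)} {x : X} : degree 𝒯 x = #𝒯 ↔ ∀ T ∈ 𝒯, x ∈ T :=
  card_filter_eq_iff

lemma inter_eq_of_card_eq_three {A E F : Finset X} (hE : #E = 3) (hF : #F = 3) (hEF : E ≠ F)
    (hA : #A = 2) (hAE : A ⊆ E) (hAF : A ⊆ F) : E ∩ F = A := by
  have hlt : #(E ∩ F) < 3 := by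
    by_contra! h
    have hEE : E ∩ F = E := eq_of_subset_of_card_le inter_subset_left (hE ▸ h)
    exact hEF (eq_of_subset_of_card_le (hEE ▸ inter_subset_right) (by omega))
  exact (eq_of_subset_of_card_le (subset_inter hAE hAF) (by omega)).symm

variable [Fintype X] {𝒯 : Finset (Finset X)}

lemma sum_degree_eq_mul {r : ℕ} (h𝒯 : ∀ T ∈ 𝒯, #T = r) : ∑ x, degree 𝒯 x = r * #𝒯 :=
  calc ∑ x, degree 𝒯 x = ∑ T ∈ 𝒯, #T := by
        simpa [degree, bipartiteAbove, bipartiteBelow] using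
          sum_card_bipartiteAbove_eq_sum_card_bipartiteBelow (s := univ) (t := 𝒯) (· ∈ ·)
    _ = r * #𝒯 := by rw [sum_const_nat h𝒯, mul_comm]

/-- Double counting gives `3t ≤ k t + (n - k)` for the number `k` of vertices of degree `t`;
these lie in every edge, so `k ≤ 3`, and `k = 3` would force all edges to coincide. -/
lemma card_filter_degree_eq_card_eq_two (h3 : ∀ T ∈ 𝒯, #T = 3) (ht : 2 ≤ #𝒯)
    (hn : Fintype.card X ≤ 2 * #𝒯) (hdeg : ∀ x, degree 𝒯 x = #𝒯 ∨ degree 𝒯 x ≤ 1) :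
    #{x | degree 𝒯 x = #𝒯} = 2 := by
  set A : Finset X := {x | degree 𝒯 x = #𝒯}
  have hA : ∀ T ∈ 𝒯, A ⊆ T := fun T hT x hx => degree_eq_card_iff.1 (mem_filter.1 hx).2 T hT
  obtain ⟨T₀, hT₀⟩ : 𝒯.Nonempty := card_pos.1 (by omega)
  have hle : #A ≤ 3 := h3 T₀ hT₀ ▸ card_le_card (hA T₀ hT₀)
  have hne : #A ≠ 3 := by
    intro h
    have h𝒯 : 𝒯 ⊆ {A} := fun T hT =>
      mem_singleton.2 (eq_of_subset_of_card_le (hA T hT) (by rw [h3 T hT, h])).symm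
    have := card_le_card h𝒯
    rw [card_singleton] at this
    omega
  have hcount : 3 * #𝒯 ≤ #A * #𝒯 + (Fintype.card X - #A) :=
    calc 3 * #𝒯 = ∑ x ∈ A, degree 𝒯 x + ∑ x ∈ Aᶜ, degree 𝒯 x := by
          rw [sum_add_sum_compl, sum_degree_eq_mul h3]
      _ ≤ ∑ _x ∈ A, #𝒯 + ∑ _x ∈ Aᶜ, 1 := by
          refine add_le_add (sum_le_sum fun x hx => (mem_filter.1 hx).2.le) ?_
          exact sum_le_sum fun x hx => (hdeg x).resolve_left (by simpa [A] using hx)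
      _ = #A * #𝒯 + (Fintype.card X - #A) := by simp [card_compl]
  interval_cases h : #A <;> omega

lemma exists_card_eq_two_forall_inter_eq (h3 : ∀ T ∈ 𝒯, #T = 3) (ht : 2 ≤ #𝒯)
    (hn : Fintype.card X ≤ 2 * #𝒯) (hdeg : ∀ x, degree 𝒯 x = #𝒯 ∨ degree 𝒯 x ≤ 1) :
    ∃ K : Finset X, #K = 2 ∧ ∀ E ∈ 𝒯, ∀ F ∈ 𝒯, E ≠ F → E ∩ F = K := by
  have hK := card_filter_degree_eq_card_eq_two h3 ht hn hdeg
  refine ⟨_, hK, fun E hE F hF hEF => inter_eq_of_card_eq_three (h3 E hE) (h3 F hF) hEF hK ?_ ?_⟩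
  · exact fun x hx => degree_eq_card_iff.1 (mem_filter.1 hx).2 E hE
  · exact fun x hx => degree_eq_card_iff.1 (mem_filter.1 hx).2 F hF

end UniformHypergraph

section TriangleHypergraph

variable {X : Type*} [Fintype X] (btw : X → X → X → Prop)

noncomputable def triangles : Finset (Finset X) := by
  classical exact {T | IsTriangle btw T}

@[simp]
lemma mem_triangles {T : Finset X} : T ∈ triangles btw ↔ IsTriangle btw T := by
  classical simp [triangles]

lemma coe_triangles : (triangles btw : Set (Finset X)) = {T | IsTriangle btw T} := by
  ext; simp

lemma coSize_eq_card_triangles : coSize btw = #(triangles btw) := by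
  rw [coSize, ← coe_triangles, Set.ncard_coe_finset]

lemma degB_eq_degree_triangles [DecidableEq X] (x : X) :
    degB btw x = degree (triangles btw) x := by
  rw [degB, degree, ← Set.ncard_coe_finset]
  congr 1
  ext T
  simp

end TriangleHypergraph

theorem stmt15_general {X : Type} [Fintype X] {n : ℕ} {c : ℤ}
    (hcard : Fintype.card X = n) (hnc : 2 * c - 1 < (n : ℤ))
    (btw : X → X → X → Prop)
    (hcs : (coSize btw : ℤ) = (n : ℤ) - c)
    (hdeg : ∀ x : X, (degB btw x : ℤ) = (n : ℤ) - c ∨ degB btw x ≤ 1) :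
    TightStar btw := by
  classical
  rw [coSize_eq_card_triangles] at hcs
  simp only [degB_eq_degree_triangles, ← hcs, Nat.cast_inj] at hdeg
  rcases le_or_gt #(triangles btw) 1 with h | h
  · left
    rw [← coe_triangles]
    exact fun E hE F hF => card_le_one.1 h E hE F hF
  · right
    obtain ⟨K, hK, hinter⟩ := exists_card_eq_two_forall_inter_eq
      (fun T hT => ((mem_triangles btw).1 hT).1) h (by omega) hdeg
    refine ⟨K, by rw [Set.ncard_coe_finset, hK], fun E F hE hF hEF => ?_⟩
    rw [← coe_inter, hinter E ((mem_triangles btw).2 hE) F ((mem_triangles btw).2 hF) hEF]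

/-- if `n > 2c - 1` and `B` is a nonlinear betweenness structure of order
`n` and co-size `n - c` in which every point has degree `n - c` or at most `1`, then the
triangle hypergraph of `B` is a tight star. -/
theorem stmt15 {X : Type} [Fintype X] {n : ℕ} {c : ℤ}
    (hcard : Fintype.card X = n) (hnc : 2 * c - 1 < (n : ℤ))
    (btw : X → X → X → Prop) (hB : IsBtw btw) (hnl : ¬ Linear btw)
    (hcs : (coSize btw : ℤ) = (n : ℤ) - c)
    (hdeg : ∀ x : X, (degB btw x : ℤ) = (n : ℤ) - c ∨ degB btw x ≤ 1) :
    TightStar btw :=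
  stmt15_general hcard hnc btw hcs hdeg

end FMS
end
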